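/- If C is a Type III code of length n with minimum weight d, then d ≤ 3⌊n/12⌋ + 3 (the Mallows–Sloane bound). -/

import Mathlib

/-- The dual code with respect to the standard bilinear form. -/
def dualCode {F : Type*} [Field F] {n : ℕ} (C : Submodule F (Fin n → F)) :
    Submodule F (Fin n → F) where
  carrier := {y | ∀ x ∈ C, ∑ i, x i * y i = 0}
  zero_mem' := by intro x hx; simp
  add_mem' := by
    intro y z hy hz x hx
    simp [Pi.add_apply, mul_add, Finset.sum_add_distrib, hy x hx, hz x hx]
  smul_mem' := by
    intro c y hy x hx
    simp [mul_left_comm, ← Finset.mul_sum, hy x hx]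

/-- The Hamming weight of a vector: the number of nonzero coordinates. -/
def wt {F : Type*} [Zero F] [DecidableEq F] {n : ℕ} (v : Fin n → F) : ℕ :=
  (Finset.univ.filter fun i => v i ≠ 0).card

/-!
Put `x = 1`. The weight enumerator `W(y) = ∑_{v ∈ C} y^{wt v}` of a self-dual ternary code of
length `n = 4N` satisfies the MacWilliams identity `T W = |C| W`, where
`T p (y) = (1 + 2y)ⁿ p((1 - y)/(1 + 2y))`, and it only involves powers of `y³`. The Gleason
polynomials `f = 1 + 8y³` and `g = y³(1 - y³)³` satisfy `T f = 9 f` and `T g = 729 g`, so the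
combination `E = ∑_{i ≤ m} cᵢ f^{N-3i} gⁱ` (`m = ⌊N/3⌋`) with `E ≡ 1 mod y^{3m+3}` is
`T`-invariant too. If `d > 3m + 3`, then `y^{3m+3}` divides `W - E`, hence so does
`(1 - y)^{3m+3}` (apply `T`), hence so does `(1 - y³)^{3m+3}` (`W - E` is a polynomial in `y³`);
as `12m + 12 > n`, this forces `W = E`. But a residue computation in the spirit of the
Bürmann–Lagrange formula shows that the coefficient of `y^{3m+3}` in `E` is positive, while in
`W` it is `0`.
-/

theorem AddChar.map_sum_eq_prod {ι A M : Type*} [AddCommMonoid A] [CommMonoid M]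
    (ψ : AddChar A M) (s : Finset ι) (f : ι → A) : ψ (∑ i ∈ s, f i) = ∏ i ∈ s, ψ (f i) := by
  classical
  induction s using Finset.induction_on with
  | empty => simp
  | insert a s ha ih => rw [Finset.sum_insert ha, Finset.prod_insert ha, map_add_eq_mul, ih]

section Weight

variable {F : Type*} [Zero F] [DecidableEq F] {n : ℕ}

theorem wt_eq_hammingNorm (v : Fin n → F) : wt v = hammingNorm v := rfl

theorem wt_le (v : Fin n → F) : wt v ≤ n := by
  simpa [wt_eq_hammingNorm] using hammingNorm_le_card_fintype (x := v)

theorem wt_eq_zero {v : Fin n → F} : wt v = 0 ↔ v = 0 := hammingNorm_eq_zero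

theorem prod_ite_eq_zero_eq_pow_mul_pow {R : Type*} [CommMonoid R] (v : Fin n → F) (x y : R) :
    ∏ i, (if v i = 0 then x else y) = x ^ (n - wt v) * y ^ wt v := by
  rw [Finset.prod_ite, Finset.prod_const, Finset.prod_const, wt]
  congr 2
  have := Finset.card_filter_add_card_filter_not (s := Finset.univ) (fun i => v i = 0)
  simp only [Finset.card_univ, Fintype.card_fin, ne_eq] at this ⊢
  omega

end Weight

section WeightEnumerator

open scoped Classical
open Polynomial

variable {F : Type*} [Field F] [Fintype F] [DecidableEq F] {n : ℕ}

noncomputable def weightEnumerator {R : Type*} [CommSemiring R] (C : Submodule F (Fin n → F))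
    (x y : R) : R :=
  ∑ v : C, x ^ (n - wt (v : Fin n → F)) * y ^ wt (v : Fin n → F)

variable (C : Submodule F (Fin n → F))

theorem map_weightEnumerator {R S : Type*} [CommSemiring R] [CommSemiring S] (f : R →+* S)
    (x y : R) : f (weightEnumerator C x y) = weightEnumerator C (f x) (f y) := by
  simp [weightEnumerator]

theorem weightEnumerator_zero_right {R : Type*} [CommSemiring R] (x : R) :
    weightEnumerator C x 0 = x ^ n := by
  rw [weightEnumerator, Finset.sum_eq_single 0]
  · simp [wt_eq_zero.2]
  · intro v _ hv
    rw [zero_pow (wt_eq_zero.not.2 (by simpa using hv)), mul_zero]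
  · simp

theorem weightEnumerator_self {R : Type*} [CommSemiring R] (t : R) :
    weightEnumerator C t t = Fintype.card C * t ^ n := by
  simp [weightEnumerator, ← pow_add, Nat.sub_add_cancel (wt_le _)]

theorem weightEnumerator_mul_right {R : Type*} [CommSemiring R] {k : ℕ} {ω : R}
    (hω : ω ^ k = 1) (hC : ∀ v ∈ C, k ∣ wt v) (x y : R) :
    weightEnumerator C x (ω * y) = weightEnumerator C x y := by
  refine Finset.sum_congr rfl fun v _ => ?_
  obtain ⟨j, hj⟩ := hC v v.2
  rw [mul_pow, hj, pow_mul, hω, one_pow, one_mul]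

theorem natDegree_weightEnumerator_le {R : Type*} [CommSemiring R] :
    (weightEnumerator C (1 : R[X]) X).natDegree ≤ n := by
  refine natDegree_sum_le_of_forall_le _ _ fun v _ => ?_
  rw [one_pow, one_mul]
  exact (natDegree_X_pow_le _).trans (wt_le _)

theorem coeff_weightEnumerator {R : Type*} [CommSemiring R] (j : ℕ) :
    (weightEnumerator C (1 : R[X]) X).coeff j
      = (Finset.univ.filter fun v : C => wt (v : Fin n → F) = j).card := by
  simp [weightEnumerator, finsetSum_coeff, coeff_X_pow, eq_comm]

theorem coeff_weightEnumerator_eq_ite {R : Type*} [CommSemiring R] {j : ℕ}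
    (h : ∀ v ∈ C, wt v = j → v = 0) :
    (weightEnumerator C (1 : R[X]) X).coeff j = if j = 0 then 1 else 0 := by
  rw [coeff_weightEnumerator]
  split_ifs with hj
  · subst hj
    rw [show Finset.univ.filter (fun v : C => wt (v : Fin n → F) = 0) = {0} by
      ext u
      simp only [Finset.mem_filter, Finset.mem_univ, true_and, Finset.mem_singleton, wt_eq_zero,
        Submodule.coe_eq_zero]]
    simp
  · rw [Finset.card_eq_zero.2 (Finset.filter_eq_empty_iff.2 fun u _ hu => hj ?_), Nat.cast_zero]
    rw [← hu, h u u.2 hu, wt_eq_zero]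

theorem sum_addChar_mul_mul_ite {R : Type*} [CommRing R] [IsDomain R] {ψ : AddChar F R}
    (hψ : ψ.IsPrimitive) (u : F) (x y : R) :
    ∑ a : F, ψ (a * u) * (if a = 0 then x else y)
      = if u = 0 then x + (Fintype.card F - 1) * y else x - y := by
  have hsplit : ∀ a : F, ψ (a * u) * (if a = 0 then x else y)
      = ψ (a * u) * y + if a = 0 then x - y else 0 := fun a => by
    rcases eq_or_ne a 0 with rfl | ha <;> simp [*]
  rw [Finset.sum_congr rfl fun a _ => hsplit a, Finset.sum_add_distrib, ← Finset.sum_mul,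
    AddChar.sum_mulShift u hψ, Finset.sum_ite_eq', if_pos (Finset.mem_univ _)]
  split_ifs <;> ring

theorem sum_addChar_dotProduct {R : Type*} [CommRing R] [IsDomain R] {ψ : AddChar F R}
    (hψ : ψ.IsPrimitive) (v : Fin n → F) :
    ∑ u : C, ψ ((u : Fin n → F) ⬝ᵥ v) = if v ∈ dualCode C then (Fintype.card C : R) else 0 := by
  let f : C →+ F :=
    { toFun := fun u => (u : Fin n → F) ⬝ᵥ v
      map_zero' := zero_dotProduct v
      map_add' := fun a b => add_dotProduct _ _ v }
  have hf : ψ.compAddMonoidHom f = 0 ↔ v ∈ dualCode C := by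
    refine ⟨fun h x hx => ?_, fun hv => AddChar.eq_zero_iff.2 fun u => ?_⟩
    · by_contra hb
      obtain ⟨a, ha⟩ := AddChar.ne_one_iff.1 (hψ hb)
      have h' := AddChar.eq_zero_iff.1 h ⟨a • x, C.smul_mem a hx⟩
      change ψ ((a • x) ⬝ᵥ v) = 1 at h'
      rw [smul_dotProduct, smul_eq_mul, mul_comm] at h'
      exact ha h'
    · simp [f, show (u : Fin n → F) ⬝ᵥ v = 0 from hv u u.2]
  simp_rw [← hf]
  exact AddChar.sum_eq_ite (ψ.compAddMonoidHom f)

theorem weightEnumerator_macWilliams {R : Type*} [CommRing R] [IsDomain R] {ψ : AddChar F R}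
    (hψ : ψ.IsPrimitive) (x y : R) :
    weightEnumerator C (x + (Fintype.card F - 1) * y) (x - y)
      = Fintype.card C * weightEnumerator (dualCode C) x y := by
  calc weightEnumerator C (x + (Fintype.card F - 1) * y) (x - y)
      = ∑ u : C, ∏ i, ∑ a : F, ψ (a * (u : Fin n → F) i) * (if a = 0 then x else y) := by
        simp only [sum_addChar_mul_mul_ite hψ, prod_ite_eq_zero_eq_pow_mul_pow, weightEnumerator]
    _ = ∑ u : C, ∑ v : Fin n → F, ψ ((u : Fin n → F) ⬝ᵥ v) * (x ^ (n - wt v) * y ^ wt v) := by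
        refine Finset.sum_congr rfl fun u _ => ?_
        rw [Fintype.prod_sum]
        refine Finset.sum_congr rfl fun v _ => ?_
        rw [Finset.prod_mul_distrib, prod_ite_eq_zero_eq_pow_mul_pow, dotProduct,
          AddChar.map_sum_eq_prod]
        simp only [mul_comm]
    _ = ∑ v : Fin n → F, if v ∈ dualCode C then
          (Fintype.card C : R) * (x ^ (n - wt v) * y ^ wt v) else 0 := by
        rw [Finset.sum_comm]
        simp only [← Finset.sum_mul, sum_addChar_dotProduct C hψ, ite_mul, zero_mul]
    _ = Fintype.card C * weightEnumerator (dualCode C) x y := by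
        rw [← Finset.sum_filter, weightEnumerator, Finset.mul_sum]
        exact Finset.sum_subtype _ (by simp) _

end WeightEnumerator

theorem IsPrimitiveRoot.one_add_add_sq_eq_zero {R : Type*} [CommRing R] [IsDomain R] {ω : R}
    (hω : IsPrimitiveRoot ω 3) : 1 + ω + ω ^ 2 = 0 := by
  simpa [Finset.sum_range_succ] using hω.geom_sum_eq_zero (by norm_num)

section SelfDualTernary

open scoped Classical

variable {n : ℕ} {C : Submodule (ZMod 3) (Fin n → ZMod 3)}

theorem three_dvd_wt_of_dotProduct_self_eq_zero {v : Fin n → ZMod 3} (hv : v ⬝ᵥ v = 0) :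
    3 ∣ wt v := by
  have hsq : ∀ a : ZMod 3, a * a = if a = 0 then 0 else 1 := by decide
  simp only [dotProduct, hsq, Finset.sum_ite, Finset.sum_const_zero, Finset.sum_const,
    nsmul_eq_mul, mul_one, zero_add] at hv
  exact (ZMod.natCast_eq_zero_iff _ 3).1 hv

theorem three_dvd_wt (hsd : C = dualCode C) {v : Fin n → ZMod 3} (hv : v ∈ C) : 3 ∣ wt v :=
  three_dvd_wt_of_dotProduct_self_eq_zero ((hsd ▸ hv : v ∈ dualCode C) v hv)

theorem weightEnumerator_add_two_mul_sub {R : Type*} [CommRing R] [IsDomain R]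
    {ψ : AddChar (ZMod 3) R} (hψ : ψ.IsPrimitive) (hsd : C = dualCode C) (x y : R) :
    weightEnumerator C (x + 2 * y) (x - y) = Fintype.card C * weightEnumerator C x y := by
  have h := weightEnumerator_macWilliams C hψ x y
  rwa [ZMod.card, ← hsd, show ((3 : ℕ) : R) - 1 = 2 by norm_num] at h

theorem card_sq_of_selfDual (hsd : C = dualCode C) : Fintype.card C ^ 2 = 3 ^ n := by
  have h := weightEnumerator_add_two_mul_sub (ZMod.isPrimitive_stdAddChar 3) hsd (1 : ℂ) 1
  rw [sub_self, weightEnumerator_zero_right, weightEnumerator_self] at h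
  have h' : ((Fintype.card C ^ 2 : ℕ) : ℂ) = ((3 ^ n : ℕ) : ℂ) := by
    push_cast
    linear_combination -h
  exact_mod_cast h'

theorem exists_card_eq_three_pow_of_selfDual (hsd : C = dualCode C) :
    ∃ k, n = 2 * k ∧ Fintype.card C = 3 ^ k := by
  have hsq := card_sq_of_selfDual hsd
  obtain ⟨k, -, hk⟩ := (Nat.dvd_prime_pow Nat.prime_three).1 (Dvd.intro _ ((sq _).symm.trans hsq))
  rw [hk, ← pow_mul] at hsq
  exact ⟨k, by have := Nat.pow_right_injective (Nat.le_succ 2) hsq; omega, hk⟩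

/-- MacWilliams at `(1, ω)` and at `(1 + 2ω, ω(1 - ω))`, with the invariance under `y ↦ ωy`. -/
theorem three_add_six_mul_pow_eq_card_pow_three (hsd : C = dualCode C) {ω : ℂ}
    (hω : IsPrimitiveRoot ω 3) : (3 + 6 * ω) ^ n = (Fintype.card C : ℂ) ^ 3 := by
  have hsum := hω.one_add_add_sq_eq_zero
  have hinv := weightEnumerator_mul_right C hω.pow_eq_one fun v hv => three_dvd_wt hsd hv
  have hMW := weightEnumerator_add_two_mul_sub (ZMod.isPrimitive_stdAddChar 3) hsd (R := ℂ)
  have h0 := hinv 1 1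
  have h1 := hMW 1 ω
  have h2 := hMW (1 + 2 * ω) (ω * (1 - ω))
  rw [mul_one] at h0
  rw [h0, weightEnumerator_self, one_pow, mul_one] at h1
  rw [hinv, h1, show 1 + 2 * ω - ω * (1 - ω) = 0 by linear_combination hsum,
    weightEnumerator_zero_right, show 1 + 2 * ω + 2 * (ω * (1 - ω)) = 3 + 6 * ω by
      linear_combination -2 * hsum] at h2
  rw [h2]
  ring

theorem four_dvd_of_selfDual (hsd : C = dualCode C) : 4 ∣ n := by
  obtain ⟨k, hk, hcard⟩ := exists_card_eq_three_pow_of_selfDual hsd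
  obtain ⟨ω, hω⟩ : ∃ ω : ℂ, IsPrimitiveRoot ω 3 := ⟨_, Complex.isPrimitiveRoot_exp 3 (by norm_num)⟩
  have key := three_add_six_mul_pow_eq_card_pow_three hsd hω
  have hsq : (3 + 6 * ω) ^ 2 = -27 := by linear_combination 36 * hω.one_add_add_sq_eq_zero
  rw [hcard, hk, pow_mul, hsq] at key
  push_cast at key
  rw [← pow_mul, mul_comm, pow_mul, show (3 : ℂ) ^ 3 = 27 by norm_num] at key
  obtain ⟨j, rfl⟩ : Even k := by
    by_contra hodd
    rw [(Nat.not_even_iff_odd.1 hodd).neg_pow] at key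
    exact pow_ne_zero k (by norm_num : (27 : ℂ) ≠ 0) (by linear_combination -key / 2)
  exact ⟨j, by omega⟩

end SelfDualTernary

section MacWilliamsTransform

open Polynomial

variable {K : Type*} [Field K]

/-- For `p` of degree at most `N` this is `(1 + 2y)ᴺ p((1 - y)/(1 + 2y))`: the MacWilliams
substitution `(x, y) ↦ (x + 2y, x - y)` applied to the degree-`N` homogenisation of `p`, at
`x = 1`. -/
noncomputable def macWilliamsTransform (N : ℕ) : K[X] →ₗ[K] K[X] :=
  ∑ w ∈ Finset.range (N + 1), (lcoeff K w).smulRight ((1 + 2 * X) ^ (N - w) * (1 - X) ^ w)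

theorem macWilliamsTransform_apply (N : ℕ) (p : K[X]) :
    macWilliamsTransform N p
      = ∑ w ∈ Finset.range (N + 1), p.coeff w • ((1 + 2 * X) ^ (N - w) * (1 - X) ^ w) := by
  simp [macWilliamsTransform]

theorem macWilliamsTransform_X_pow {N w : ℕ} (hw : w ≤ N) :
    macWilliamsTransform N (X ^ w : K[X]) = (1 + 2 * X) ^ (N - w) * (1 - X) ^ w := by
  simp [macWilliamsTransform_apply, coeff_X_pow, Nat.lt_succ_of_le hw]

theorem one_sub_X_pow_dvd_macWilliamsTransform {N e : ℕ} {p : K[X]} (hp : X ^ e ∣ p) :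
    (1 - X) ^ e ∣ macWilliamsTransform N p := by
  rw [macWilliamsTransform_apply]
  refine Finset.dvd_sum fun w _ => ?_
  by_cases hw : w < e
  · simp [X_pow_dvd_iff.1 hp w hw]
  · exact dvd_smul_of_dvd _ (dvd_mul_of_dvd_right (pow_dvd_pow _ (not_lt.1 hw)) _)

theorem eval_macWilliamsTransform {N : ℕ} {p : K[X]} (hp : p.natDegree ≤ N) {t : K}
    (ht : 1 + 2 * t ≠ 0) :
    (macWilliamsTransform N p).eval t = (1 + 2 * t) ^ N * p.eval ((1 - t) / (1 + 2 * t)) := by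
  rw [macWilliamsTransform_apply, eval_finsetSum, eval_eq_sum_range' (Nat.lt_succ_of_le hp),
    Finset.mul_sum]
  refine Finset.sum_congr rfl fun w hw => ?_
  rw [← Nat.sub_add_cancel (Nat.lt_succ_iff.1 (Finset.mem_range.1 hw)), pow_add]
  simp only [eval_smul, eval_mul, eval_pow, eval_add, eval_sub, eval_one, eval_X, eval_ofNat,
    smul_eq_mul, Nat.add_sub_cancel, div_pow]
  field_simp

variable [CharZero K]

theorem eq_of_eval_eq_of_one_add_two_mul_ne_zero {p q : K[X]}
    (h : ∀ t : K, 1 + 2 * t ≠ 0 → p.eval t = q.eval t) : p = q := by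
  refine eq_of_infinite_eval_eq p q ((Set.finite_singleton (-1 / 2 : K)).infinite_compl.mono ?_)
  intro t ht
  refine h t fun h0 => ht ?_
  rw [Set.mem_singleton_iff]
  linear_combination h0 / 2

theorem macWilliamsTransform_mul {N M : ℕ} {p q : K[X]} (hp : p.natDegree ≤ N)
    (hq : q.natDegree ≤ M) :
    macWilliamsTransform (N + M) (p * q) = macWilliamsTransform N p * macWilliamsTransform M q := by
  refine eq_of_eval_eq_of_one_add_two_mul_ne_zero fun t ht => ?_
  rw [eval_macWilliamsTransform (natDegree_mul_le.trans (add_le_add hp hq)) ht, eval_mul,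
    eval_mul, eval_macWilliamsTransform hp ht, eval_macWilliamsTransform hq ht]
  ring

theorem macWilliamsTransform_pow {N : ℕ} {p : K[X]} (hp : p.natDegree ≤ N) (k : ℕ) :
    macWilliamsTransform (k * N) (p ^ k) = macWilliamsTransform N p ^ k := by
  induction k with
  | zero => simp [macWilliamsTransform_apply]
  | succ k ih =>
    rw [pow_succ, add_mul, one_mul, macWilliamsTransform_mul (natDegree_pow_le_of_le k hp) hp, ih,
      pow_succ]

theorem macWilliamsTransform_gleason_f :
    macWilliamsTransform 4 (1 + 8 * X ^ 3 : K[X]) = 9 * (1 + 8 * X ^ 3) := by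
  refine eq_of_eval_eq_of_one_add_two_mul_ne_zero fun t ht => ?_
  rw [eval_macWilliamsTransform (by compute_degree!) ht]
  simp only [eval_add, eval_mul, eval_pow, eval_one, eval_X, eval_ofNat]
  field_simp
  ring

theorem macWilliamsTransform_gleason_g :
    macWilliamsTransform 12 (X ^ 3 * (1 - X ^ 3) ^ 3 : K[X]) = 729 * (X ^ 3 * (1 - X ^ 3) ^ 3) := by
  refine eq_of_eval_eq_of_one_add_two_mul_ne_zero fun t ht => ?_
  rw [eval_macWilliamsTransform (by compute_degree!) ht]
  simp only [eval_sub, eval_mul, eval_pow, eval_one, eval_X, eval_ofNat]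
  field_simp
  ring

end MacWilliamsTransform

section Gleason

open Polynomial

/-- `f^(N-3i) gⁱ` for `f = x⁴ + 8xy³` and `g = y³(x³ - y³)³`, at `x = 1` and in the variable
`Y = y³`. -/
noncomputable def gleasonMonomial (K : Type*) [CommRing K] (N i : ℕ) : K[X] :=
  (1 + 8 * X) ^ (N - 3 * i) * (X * (1 - X) ^ 3) ^ i

noncomputable def gleasonSum {K : Type*} [CommRing K] (N m : ℕ) (c : ℕ → K) : K[X] :=
  ∑ i ∈ Finset.range (m + 1), c i • gleasonMonomial K N i

variable {K : Type*} [Field K]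

theorem gleasonMonomial_eq_X_pow_mul (N i : ℕ) :
    gleasonMonomial K N i = X ^ i * ((1 + 8 * X) ^ (N - 3 * i) * (1 - X) ^ (3 * i)) := by
  rw [gleasonMonomial, mul_pow, pow_mul]
  ring

theorem coeff_gleasonMonomial_self (N i : ℕ) : (gleasonMonomial K N i).coeff i = 1 := by
  rw [gleasonMonomial_eq_X_pow_mul, coeff_X_pow_mul', if_pos le_rfl, Nat.sub_self,
    coeff_zero_eq_eval_zero]
  simp

theorem coeff_gleasonMonomial_of_lt {N i j : ℕ} (h : j < i) :
    (gleasonMonomial K N i).coeff j = 0 := by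
  rw [gleasonMonomial_eq_X_pow_mul, coeff_X_pow_mul', if_neg (not_le.2 h)]

theorem natDegree_gleasonSum_le {N m : ℕ} (c : ℕ → K) (h : 3 * m ≤ N) :
    (gleasonSum N m c).natDegree ≤ N + m := by
  refine natDegree_sum_le_of_forall_le _ _ fun i hi => (natDegree_smul_le _ _).trans ?_
  have hi : i ≤ m := Nat.lt_succ_iff.1 (Finset.mem_range.1 hi)
  have h1 := natDegree_pow_le_of_le (N - 3 * i)
    (show (1 + 8 * X : K[X]).natDegree ≤ 1 by compute_degree!)
  have h2 := natDegree_pow_le_of_le i (show (X * (1 - X) ^ 3 : K[X]).natDegree ≤ 4 by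
    compute_degree!)
  have := natDegree_mul_le (p := (1 + 8 * X : K[X]) ^ (N - 3 * i)) (q := (X * (1 - X) ^ 3) ^ i)
  rw [gleasonMonomial]
  omega

theorem exists_coeff_gleasonSum_eq (N : ℕ) (β : ℕ → K) (m : ℕ) :
    ∃ c : ℕ → K, ∀ j ≤ m, (gleasonSum N m c).coeff j = β j := by
  induction m with
  | zero => exact ⟨fun _ => β 0, fun j hj => by
      simp [gleasonSum, Nat.le_zero.1 hj, coeff_gleasonMonomial_self]⟩
  | succ m ih =>
    obtain ⟨c, hc⟩ := ih
    set a := β (m + 1) - (gleasonSum N m c).coeff (m + 1)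
    have hsum : gleasonSum N (m + 1) (Function.update c (m + 1) a)
        = gleasonSum N m c + a • gleasonMonomial K N (m + 1) := by
      rw [gleasonSum, Finset.sum_range_succ, Function.update_self, gleasonSum]
      congr 1
      refine Finset.sum_congr rfl fun i hi => ?_
      rw [Function.update_of_ne (by simp at hi; omega)]
    refine ⟨Function.update c (m + 1) a, fun j hj => ?_⟩
    rw [hsum, coeff_add, coeff_smul, smul_eq_mul]
    rcases Nat.lt_or_ge j (m + 1) with hj' | hj'
    · rw [hc j (by omega), coeff_gleasonMonomial_of_lt hj', mul_zero, add_zero]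
    · rw [show j = m + 1 by omega, coeff_gleasonMonomial_self, mul_one, add_sub_cancel]

variable [CharZero K]

theorem macWilliamsTransform_expand_gleasonMonomial {N i : ℕ} (hi : 3 * i ≤ N) :
    macWilliamsTransform (4 * N) (expand K 3 (gleasonMonomial K N i))
      = (9 ^ N : K) • expand K 3 (gleasonMonomial K N i) := by
  have he : expand K 3 (gleasonMonomial K N i)
      = (1 + 8 * X ^ 3) ^ (N - 3 * i) * (X ^ 3 * (1 - X ^ 3) ^ 3) ^ i := by
    simp [gleasonMonomial, map_ofNat]
  have h9 : (9 : K) ^ N = 9 ^ (N - 3 * i) * 729 ^ i := by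
    rw [show (729 : K) = 9 ^ 3 by norm_num, ← pow_mul, ← pow_add, Nat.sub_add_cancel hi]
  rw [he, show 4 * N = (N - 3 * i) * 4 + i * 12 by omega,
    macWilliamsTransform_mul (natDegree_pow_le_of_le _ (by compute_degree!))
      (natDegree_pow_le_of_le _ (by compute_degree!)),
    macWilliamsTransform_pow (by compute_degree!), macWilliamsTransform_pow (by compute_degree!),
    macWilliamsTransform_gleason_f, macWilliamsTransform_gleason_g, mul_pow, mul_pow, smul_eq_C_mul,
    h9]
  simp only [map_mul, map_pow, map_ofNat]
  ring

theorem macWilliamsTransform_expand_gleasonSum {N m : ℕ} (h : 3 * m ≤ N) (c : ℕ → K) :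
    macWilliamsTransform (4 * N) (expand K 3 (gleasonSum N m c))
      = (9 ^ N : K) • expand K 3 (gleasonSum N m c) := by
  simp only [gleasonSum, map_sum, map_smul, Finset.smul_sum]
  refine Finset.sum_congr rfl fun i hi => ?_
  rw [macWilliamsTransform_expand_gleasonMonomial (by simp at hi; omega), smul_comm]

end Gleason

namespace Polynomial

theorem expand_contract_of_coeff_eq_zero {R : Type*} [CommSemiring R] {p : ℕ} (hp : p ≠ 0)
    {f : R[X]} (hf : ∀ n, ¬ p ∣ n → f.coeff n = 0) : expand R p (contract p f) = f := by
  ext n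
  rw [coeff_expand hp.bot_lt, coeff_contract hp]
  split_ifs with h
  · rw [Nat.div_mul_cancel h]
  · exact (hf n h).symm

variable {K : Type*} [Field K]

theorem one_sub_X_pow_dvd_of_dvd_expand {p : ℕ} (hp : (p : K) ≠ 0) {k : ℕ} {r : K[X]}
    (h : (1 - X) ^ k ∣ expand K p r) : (1 - X) ^ k ∣ r := by
  induction k with
  | zero => exact one_dvd r
  | succ k ih =>
    obtain ⟨s, rfl⟩ := ih ((pow_dvd_pow _ k.le_succ).trans h)
    have hexp : expand K p ((1 - X) ^ k * s)
        = (1 - X) ^ k * ((∑ i ∈ Finset.range p, X ^ i) ^ k * expand K p s) := by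
      rw [map_mul, map_pow, map_sub, map_one, expand_X, ← mul_neg_geom_sum, mul_pow]
      ring
    have hX : (1 - X : K[X]) ≠ 0 := fun h0 => by simpa using congrArg (eval 0) h0
    rw [hexp, pow_succ, mul_dvd_mul_iff_left (pow_ne_zero _ hX)] at h
    obtain ⟨t, ht⟩ := h
    have hs : s.eval 1 = 0 := by simpa [expand_eval, hp] using congrArg (eval 1) ht
    obtain ⟨u, rfl⟩ := dvd_iff_isRoot.2 hs
    exact ⟨-u, by rw [pow_succ, C_1]; ring⟩

theorem eq_zero_of_X_pow_dvd_of_one_sub_X_pow_dvd {a b : ℕ} {r : K[X]} (ha : X ^ a ∣ r)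
    (hb : (1 - X) ^ b ∣ r) (hr : r.natDegree < a + b) : r = 0 := by
  have hcop : IsCoprime (X : K[X]) (1 - X) := ⟨1, 1, by ring⟩
  refine eq_zero_of_dvd_of_natDegree_lt ((hcop.pow).mul_dvd ha hb) ?_
  rwa [show (X ^ a * (1 - X) ^ b : K[X]).natDegree = a + b by compute_degree!]

end Polynomial

open Polynomial in
theorem eq_zero_of_macWilliamsTransform_eq_smul {K : Type*} [Field K] [CharZero K] {n e : ℕ}
    {c : K} (hc : c ≠ 0) {p : K[X]} (hT : macWilliamsTransform n p = c • p)
    (h3 : ∀ j, ¬ 3 ∣ j → p.coeff j = 0) (hlow : X ^ (3 * e) ∣ p) (hdeg : p.natDegree < 12 * e) :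
    p = 0 := by
  have h1 : (1 - X) ^ (3 * e) ∣ p := by
    have h := one_sub_X_pow_dvd_macWilliamsTransform (N := n) hlow
    rwa [hT, smul_eq_C_mul, (isUnit_C.2 hc.isUnit).dvd_mul_left] at h
  rw [← expand_contract_of_coeff_eq_zero three_ne_zero h3] at h1 hlow hdeg ⊢
  rw [natDegree_expand] at hdeg
  rw [eq_zero_of_X_pow_dvd_of_one_sub_X_pow_dvd (a := e) ?_
    (one_sub_X_pow_dvd_of_dvd_expand (by norm_num) h1) (by omega), map_zero]
  refine X_pow_dvd_iff.2 fun j hj => ?_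
  rw [← coeff_expand_mul three_pos]
  exact X_pow_dvd_iff.1 hlow _ (by omega)

namespace PowerSeries

section CommRing

variable {R : Type*} [CommRing R]

theorem derivative_ofNat (n : ℕ) [n.AtLeastTwo] :
    d⁄dX R (no_index (OfNat.ofNat n : R⟦X⟧)) = 0 := by
  rw [← Nat.cast_ofNat, Derivation.map_natCast]

theorem one_sub_mul_mk_one : (1 - X) * (mk 1 : R⟦X⟧) = 1 := by
  rw [mul_comm, mk_one_mul_one_sub_eq_one]

theorem derivative_mk_one : d⁄dX R (mk 1 : R⟦X⟧) = mk 1 ^ 2 := by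
  have h := congrArg (d⁄dX R) (mk_one_mul_one_sub_eq_one (S := R))
  simp only [Derivation.leibniz, map_sub, derivative_X, Derivation.map_one_eq_zero,
    smul_eq_mul] at h
  linear_combination (mk 1 : R⟦X⟧) * h - d⁄dX R (mk 1 : R⟦X⟧) * one_sub_mul_mk_one (R := R)

theorem coeff_succ_mul_of_coeff_eq_ite {f g : R⟦X⟧} {m : ℕ}
    (hf : ∀ j ≤ m, coeff j f = if j = 0 then 1 else 0) :
    coeff (m + 1) (f * g) = coeff (m + 1) f * constantCoeff g + coeff (m + 1) g := by
  obtain ⟨q, hq⟩ : X ^ (m + 1) ∣ f - 1 := X_pow_dvd_iff.2 fun j hj => by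
    rw [map_sub, hf j (by omega), coeff_one]
    split_ifs <;> simp_all
  rw [eq_add_of_sub_eq hq, add_mul, mul_assoc, one_mul, map_add, map_add, coeff_one,
    if_neg (Nat.succ_ne_zero m), add_zero]
  simp only [coeff_X_pow_mul', le_rfl, if_true, Nat.sub_self, coeff_zero_eq_constantCoeff,
    map_mul]

end CommRing

section Ordered

variable {R : Type*} [CommSemiring R] [PartialOrder R] [IsStrictOrderedRing R]

theorem coeff_mul_nonneg {f g : R⟦X⟧} (hf : ∀ n, 0 ≤ coeff n f) (hg : ∀ n, 0 ≤ coeff n g)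
    (n : ℕ) : 0 ≤ coeff n (f * g) := by
  rw [coeff_mul]
  exact Finset.sum_nonneg fun p _ => mul_nonneg (hf _) (hg _)

theorem coeff_pow_nonneg {f : R⟦X⟧} (hf : ∀ n, 0 ≤ coeff n f) (k n : ℕ) :
    0 ≤ coeff n (f ^ k) := by
  induction k generalizing n with
  | zero => rw [pow_zero, coeff_one]; split_ifs <;> simp
  | succ k ih => rw [pow_succ]; exact coeff_mul_nonneg ih hf n

theorem coeff_mul_pos {f g : R⟦X⟧} (hf : ∀ n, 0 ≤ coeff n f) (hg : ∀ n, 0 ≤ coeff n g)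
    {n : ℕ} (hf0 : 0 < coeff 0 f) (hgn : 0 < coeff n g) : 0 < coeff n (f * g) := by
  rw [coeff_mul]
  exact Finset.sum_pos' (fun p _ => mul_nonneg (hf _) (hg _)) ⟨(0, n), by simp, mul_pos hf0 hgn⟩

end Ordered

theorem coeff_succ_pow_succ {K : Type*} [Field K] [CharZero K] (u : K⟦X⟧) (k : ℕ) :
    coeff (k + 1) (u ^ (k + 1)) = coeff k (u ^ k * d⁄dX K u) := by
  have h := coeff_derivative (u ^ (k + 1)) k
  rw [derivative_pow, Nat.add_sub_cancel, mul_assoc, ← map_natCast (C (R := K)),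
    coeff_C_mul, Nat.cast_succ, mul_comm] at h
  exact mul_right_cancel₀ (Nat.cast_add_one_ne_zero k) h.symm

end PowerSeries

section LagrangeKernel

open PowerSeries

variable {K : Type*} [Field K]

/-- With `φ = Y(1 - Y)³/(1 + 8Y)³`, so that `gleasonMonomial K N i = (1 + 8Y)ᴺ φⁱ`, this is
`(Y/φ)^(m+1) (1 + 8Y)⁻ᴺ · Yφ'/φ` for `h = 3m + 2 - N`. -/
noncomputable def lagrangeKernel (K : Type*) [Field K] (m h : ℕ) : K⟦X⟧ :=
  (1 + 8 * X) ^ h * mk 1 ^ (3 * m + 4) * (1 - 20 * X - 8 * X ^ 2)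

theorem constantCoeff_lagrangeKernel (m h : ℕ) : constantCoeff (lagrangeKernel K m h) = 1 := by
  simp [lagrangeKernel]

theorem coe_gleasonMonomial (N i : ℕ) :
    (gleasonMonomial K N i : K⟦X⟧) = (1 + 8 * X) ^ (N - 3 * i) * (X * (1 - X) ^ 3) ^ i := by
  rw [← Polynomial.coeToPowerSeries.ringHom_apply, gleasonMonomial]
  simp only [map_mul, map_pow, map_add, map_sub, map_one, map_ofNat,
    Polynomial.coeToPowerSeries.ringHom_apply, Polynomial.coe_X]

/-- This is `[Y^(j+1)] (Y/φ)^(j+1) · Yφ'/φ = 0`, i.e. `coeff_succ_pow_succ` for `u = Y/φ`. -/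
theorem coeff_succ_lagrangeKernel_self [CharZero K] (j : ℕ) :
    coeff (j + 1) (lagrangeKernel K j (3 * j + 2)) = 0 := by
  have hA : d⁄dX K (1 + 8 * X) = 8 := by simp [derivative_ofNat]
  have hG : (1 - X) * mk 1 = (1 : K⟦X⟧) := one_sub_mul_mk_one
  rw [lagrangeKernel]
  generalize hA' : (1 + 8 * X : K⟦X⟧) = A at hA ⊢
  generalize hG' : (mk 1 : K⟦X⟧) = G at hG ⊢
  have hdG : d⁄dX K G = G ^ 2 := hG' ▸ derivative_mk_one
  have hpow : (A ^ 3 * G ^ 3) ^ (j + 1)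
      = A ^ (3 * j + 2) * G ^ (3 * j + 4) * (A * (1 - X)) := by
    rw [mul_pow, ← pow_mul, ← pow_mul]
    linear_combination (-(A ^ (3 * j + 3) * G ^ (3 * j + 3))) * hG
  have hderiv : (A ^ 3 * G ^ 3) ^ j * d⁄dX K (A ^ 3 * G ^ 3)
      = 27 * (A ^ (3 * j + 2) * G ^ (3 * j + 4)) := by
    rw [Derivation.leibniz, derivative_pow, derivative_pow, hA, hdG, mul_pow, ← pow_mul,
      ← pow_mul, smul_eq_mul, smul_eq_mul]
    linear_combination (-24 * A ^ (3 * j + 2) * G ^ (3 * j + 3)) * hG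
      - 3 * A ^ (3 * j + 2) * G ^ (3 * j + 4) * hA'
  have key := coeff_succ_pow_succ (A ^ 3 * G ^ 3) j
  rw [hpow, hderiv] at key
  rw [show A ^ (3 * j + 2) * G ^ (3 * j + 4) * (1 - 20 * X - 8 * X ^ 2)
      = A ^ (3 * j + 2) * G ^ (3 * j + 4) * (A * (1 - X))
        - X * (27 * (A ^ (3 * j + 2) * G ^ (3 * j + 4))) by rw [← hA']; ring,
    map_sub, coeff_succ_X_mul, key, sub_self]

theorem gleasonMonomial_mul_lagrangeKernel {N m i : ℕ} (hi : i ≤ m) (hiN : 3 * i ≤ N)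
    (hN : N ≤ 3 * m + 2) :
    (gleasonMonomial K N i : K⟦X⟧) * lagrangeKernel K m (3 * m + 2 - N)
      = X ^ i * lagrangeKernel K (m - i) (3 * (m - i) + 2) := by
  obtain ⟨k, rfl⟩ := Nat.exists_eq_add_of_le hi
  have hG : (1 - X : K⟦X⟧) ^ (3 * i) * mk 1 ^ (3 * i) = 1 := by
    rw [← mul_pow, one_sub_mul_mk_one, one_pow]
  rw [coe_gleasonMonomial, lagrangeKernel, lagrangeKernel, Nat.add_sub_cancel_left,
    show 3 * k + 2 = (N - 3 * i) + (3 * (i + k) + 2 - N) by omega,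
    show 3 * (i + k) + 4 = 3 * i + (3 * k + 4) by ring, pow_add, pow_add, mul_pow, ← pow_mul]
  linear_combination (X ^ i * (1 + 8 * X) ^ (N - 3 * i) * (1 + 8 * X) ^ (3 * (i + k) + 2 - N)
    * mk 1 ^ (3 * k + 4) * (1 - 20 * X - 8 * X ^ 2)) * hG

theorem coeff_succ_gleasonSum_mul_lagrangeKernel [CharZero K] {N m : ℕ} (h3m : 3 * m ≤ N)
    (hN : N ≤ 3 * m + 2) (c : ℕ → K) :
    coeff (m + 1) ((gleasonSum N m c : K⟦X⟧) * lagrangeKernel K m (3 * m + 2 - N)) = 0 := by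
  rw [gleasonSum, ← Polynomial.coeToPowerSeries.ringHom_apply, map_sum, Finset.sum_mul, map_sum]
  refine Finset.sum_eq_zero fun i hi => ?_
  have hi : i ≤ m := Nat.lt_succ_iff.1 (Finset.mem_range.1 hi)
  rw [Polynomial.coeToPowerSeries.ringHom_apply, Polynomial.coe_smul, smul_mul_assoc, coeff_smul,
    gleasonMonomial_mul_lagrangeKernel hi (by omega) hN,
    show m + 1 = (m - i + 1) + i by omega, coeff_X_pow_mul, coeff_succ_lagrangeKernel_self,
    smul_zero]

theorem coeff_succ_lagrangeKernel (m h : ℕ) :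
    ((m : K) + 1) * coeff (m + 1) (lagrangeKernel K m h)
      = 8 * ((h : K) + 1 - 3 * (m + 1))
        * coeff m ((1 + 8 * X : K⟦X⟧) ^ h * mk 1 ^ (3 * m + 3)) := by
  have hA : d⁄dX K (1 + 8 * X) = 8 := by simp [derivative_ofNat]
  have hG : (1 - X) * mk 1 = (1 : K⟦X⟧) := one_sub_mul_mk_one
  rw [lagrangeKernel]
  generalize hA' : (1 + 8 * X : K⟦X⟧) = A at hA ⊢
  generalize hG' : (mk 1 : K⟦X⟧) = G at hG ⊢
  have hdG : d⁄dX K G = G ^ 2 := hG' ▸ derivative_mk_one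
  have hderiv : d⁄dX K (A ^ (h + 1) * G ^ (3 * m + 3))
      = C ((m : K) + 1) * (27 * (A ^ h * G ^ (3 * m + 4)))
        + C (8 * ((h : K) + 1 - 3 * (m + 1))) * (A ^ h * G ^ (3 * m + 3)) := by
    rw [Derivation.leibniz, derivative_pow, derivative_pow, hA, hdG]
    simp only [smul_eq_mul, map_add, map_mul, map_sub, map_natCast, map_one, map_ofNat,
      Nat.add_sub_cancel]
    push_cast
    linear_combination (-24 * ((m : K⟦X⟧) + 1) * A ^ h * G ^ (3 * m + 3)) * hG
      - (3 * ((m : K⟦X⟧) + 1) * A ^ h * G ^ (3 * m + 4)) * hA'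
  have hcoeff := coeff_derivative (A ^ (h + 1) * G ^ (3 * m + 3)) m
  rw [hderiv, map_add, coeff_C_mul, coeff_C_mul] at hcoeff
  rw [show A ^ h * G ^ (3 * m + 4) * (1 - 20 * X - 8 * X ^ 2)
      = A ^ (h + 1) * G ^ (3 * m + 3) - X * (27 * (A ^ h * G ^ (3 * m + 4))) by
    linear_combination (A ^ h * G ^ (3 * m + 3)) * (A * hG + (1 - X) * G * hA'),
    map_sub, coeff_succ_X_mul]
  linear_combination -hcoeff

variable [LinearOrder K] [IsStrictOrderedRing K]

theorem coeff_one_add_eight_X_pow_mul_mk_one_pow_pos (h m k : ℕ) :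
    0 < coeff m ((1 + 8 * X : K⟦X⟧) ^ h * mk 1 ^ (k + 1)) := by
  have hA : ∀ n, 0 ≤ coeff n (1 + 8 * X : K⟦X⟧) := by
    intro n
    rw [map_add, coeff_one, ← map_ofNat (C (R := K)), coeff_C_mul, coeff_X]
    split_ifs <;> norm_num
  have hG : ∀ n, 0 ≤ coeff n (mk 1 : K⟦X⟧) := fun n => by simp
  refine coeff_mul_pos (coeff_pow_nonneg hA h) (coeff_pow_nonneg hG _) (by simp) ?_
  rw [pow_succ]
  exact coeff_mul_pos (coeff_pow_nonneg hG k) hG (by simp) (by simp)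

theorem coeff_gleasonSum_succ_pos {N m : ℕ} (hN : 0 < N) (h3m : 3 * m ≤ N)
    (hNm : N < 3 * m + 3) {c : ℕ → K}
    (hlow : ∀ j ≤ m, (gleasonSum N m c).coeff j = if j = 0 then 1 else 0) :
    0 < (gleasonSum N m c).coeff (m + 1) := by
  have hE := coeff_succ_mul_of_coeff_eq_ite (g := lagrangeKernel K m (3 * m + 2 - N))
    (f := (gleasonSum N m c : K⟦X⟧)) (by simpa [Polynomial.coeff_coe] using hlow)
  rw [coeff_succ_gleasonSum_mul_lagrangeKernel h3m (by omega), constantCoeff_lagrangeKernel,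
    mul_one, Polynomial.coeff_coe] at hE
  have hV := coeff_succ_lagrangeKernel (K := K) m (3 * m + 2 - N)
  rw [Nat.cast_sub (by omega)] at hV
  push_cast at hV
  have hpos := coeff_one_add_eight_X_pow_mul_mk_one_pow_pos (K := K) (3 * m + 2 - N) m (3 * m + 2)
  have hN' : (0 : K) < N := by exact_mod_cast hN
  nlinarith

end LagrangeKernel

section Extremal

open scoped Classical
open Polynomial

theorem macWilliamsTransform_weightEnumerator {n : ℕ} {C : Submodule (ZMod 3) (Fin n → ZMod 3)}
    (hsd : C = dualCode C) :
    macWilliamsTransform n (weightEnumerator C (1 : ℚ[X]) X)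
      = (Fintype.card C : ℚ) • weightEnumerator C 1 X := by
  have hT : macWilliamsTransform n (weightEnumerator C (1 : ℚ[X]) X)
      = weightEnumerator C (1 + 2 * X) (1 - X) := by
    simp only [weightEnumerator, one_pow, one_mul, map_sum, macWilliamsTransform_X_pow (wt_le _)]
  let ψ := (Polynomial.C : ℂ →+* ℂ[X]).toMonoidHom.compAddChar (ZMod.stdAddChar (N := 3))
  have hψ : ψ.IsPrimitive := (ZMod.isPrimitive_stdAddChar 3).compMulHom_of_isPrimitive C_injective
  rw [hT]
  apply map_injective (algebraMap ℚ ℂ) (algebraMap ℚ ℂ).injective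
  rw [← coe_mapRingHom, map_weightEnumerator, smul_eq_C_mul, map_mul, map_weightEnumerator]
  simpa using weightEnumerator_add_two_mul_sub hψ hsd (1 : ℂ[X]) X

theorem weightEnumerator_eq_expand_gleasonSum {N : ℕ}
    {C : Submodule (ZMod 3) (Fin (4 * N) → ZMod 3)} (hsd : C = dualCode C)
    (hmin : ∀ v ∈ C, v ≠ 0 → 3 * (N / 3) + 3 ≤ wt v) {c : ℕ → ℚ}
    (hc : ∀ j ≤ N / 3, (gleasonSum N (N / 3) c).coeff j = if j = 0 then 1 else 0) :
    weightEnumerator C (1 : ℚ[X]) X = expand ℚ 3 (gleasonSum N (N / 3) c) := by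
  have hcard : (Fintype.card C : ℚ) = 9 ^ N := by
    have h9 : 3 ^ (4 * N) = (9 ^ N) ^ 2 := by
      rw [← pow_mul, show 9 = 3 ^ 2 by norm_num, ← pow_mul]
      ring_nf
    exact_mod_cast Nat.pow_left_injective two_ne_zero ((card_sq_of_selfDual hsd).trans h9)
  rw [← sub_eq_zero]
  refine eq_zero_of_macWilliamsTransform_eq_smul (n := 4 * N) (e := N / 3 + 1)
    (c := (Fintype.card C : ℚ)) (by positivity) ?_ (fun j hj => ?_)
    (X_pow_dvd_iff.2 fun j hj => ?_) ?_
  · rw [map_sub, macWilliamsTransform_weightEnumerator hsd,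
      macWilliamsTransform_expand_gleasonSum (by omega), hcard, smul_sub]
  · rw [coeff_sub, coeff_expand three_pos, if_neg hj, sub_zero,
      coeff_weightEnumerator_eq_ite C fun v hv hwv =>
        absurd (by rw [← hwv]; exact three_dvd_wt hsd hv) hj,
      if_neg (by rintro rfl; exact hj (dvd_zero 3))]
  · rw [coeff_sub, coeff_weightEnumerator_eq_ite C fun v hv hwv => by_contra fun hv0 =>
      absurd (hmin v hv hv0) (by omega), coeff_expand three_pos]
    by_cases h3 : 3 ∣ j
    · obtain ⟨k, rfl⟩ := h3
      rw [if_pos (dvd_mul_right 3 k), Nat.mul_div_cancel_left k three_pos, hc k (by omega)]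
      by_cases hk : k = 0 <;> simp [hk]
    · rw [if_neg h3, if_neg (by rintro rfl; exact h3 (dvd_zero 3)), sub_zero]
  · have h1 := natDegree_weightEnumerator_le (R := ℚ) C
    have h2 := natDegree_gleasonSum_le c (show 3 * (N / 3) ≤ N by omega)
    refine (natDegree_sub_le _ _).trans_lt (max_lt (by omega) ?_)
    rw [natDegree_expand]
    omega

end Extremal

/-- Mallows–Sloane bound for Type III codes: a ternary self-dual code of length `n`
with minimum weight `d` satisfies `d ≤ 3⌊n/12⌋ + 3`. -/
theorem typeIII_mallows_sloane {n : ℕ} (C : Submodule (ZMod 3) (Fin n → ZMod 3))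
    (hsd : C = dualCode C) (d : ℕ)
    (hmin : (∃ v ∈ C, v ≠ 0 ∧ wt v = d) ∧ ∀ v ∈ C, v ≠ 0 → d ≤ wt v) :
    d ≤ 3 * (n / 12) + 3 := by
  obtain ⟨⟨v, hvC, hv0, rfl⟩, hmin⟩ := hmin
  by_contra! hd
  obtain ⟨N, rfl⟩ := four_dvd_of_selfDual hsd
  rw [show 4 * N / 12 = N / 3 by omega] at hd
  have hN : 0 < N := by have := wt_le v; omega
  obtain ⟨c, hc⟩ := exists_coeff_gleasonSum_eq N (fun j => if j = 0 then (1 : ℚ) else 0) (N / 3)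
  have hW := weightEnumerator_eq_expand_gleasonSum hsd
    (fun u hu hu0 => (hd.trans_le (hmin u hu hu0)).le) hc
  have hzero : (gleasonSum N (N / 3) c).coeff (N / 3 + 1) = 0 := by
    rw [← Polynomial.coeff_expand_mul three_pos, ← hW, coeff_weightEnumerator_eq_ite C
      fun u hu hwu => by_contra fun hu0 => absurd (hmin u hu hu0) (by omega), if_neg (by omega)]
  exact (coeff_gleasonSum_succ_pos hN (by omega) (by omega) hc).ne' hzero
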